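/- arXiv:2002.11791 — 5 statements merged into one kernel-verified Lean document; each statement's English description precedes it below -/
import Mathlib

section
/- For a continuous function f on [a,b] with continuous second derivative, let s be the piecewise linear interpolant of f on a partition a = x_0 < x_1 < ... < x_p = b, defined on each subinterval [x_{j-1}, x_j] by s(x) = ((x - x_{j-1})/(x_j - x_{j-1})) f(x_j) + ((x_j - x)/(x_j - x_{j-1})) f(x_{j-1}). Then for all x in [a,b], |f(x) - s(x)| ≤ (1/8) (Δx)^2 · max_{a ≤ t ≤ b} |f''(t)|, where Δx = max_j (x_j - x_{j-1}). -/
/-!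
On a subinterval `[c, d]` containing `t`, expand `f` to first order about `t` at both endpoints;
the Lagrange remainders are bounded by `M/2 (d - t)²` and `M/2 (t - c)²`. The interpolation error
at `t` is minus the convex combination of these remainders with weights `(t - c)/(d - c)` and
`(d - t)/(d - c)`, hence at most `M/2 (t - c)(d - t) ≤ M/8 (d - c)²`.
-/

open Set

theorem Fin.exists_mem_Icc_castSucc_succ {α : Type*} [LinearOrder α] {n : ℕ}
    (x : Fin (n + 2) → α) {t : α} (h₀ : x 0 ≤ t) (hlast : t ≤ x (Fin.last _)) :
    ∃ j : Fin (n + 1), t ∈ Icc (x j.castSucc) (x j.succ) := by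
  induction n with
  | zero => exact ⟨0, h₀, hlast⟩
  | succ n ih =>
    by_cases h : t ≤ x (Fin.last (n + 1)).castSucc
    · obtain ⟨j, hj⟩ := ih (x ∘ Fin.castSucc) h₀ h
      exact ⟨j.castSucc, hj⟩
    · exact ⟨Fin.last _, (not_le.1 h).le, hlast⟩

theorem exists_taylor_linear_remainder_eq {a b : ℝ} {f f' f'' : ℝ → ℝ}
    (hf' : ∀ u ∈ Icc a b, HasDerivWithinAt f (f' u) (Icc a b) u)
    (hf'' : ∀ u ∈ Icc a b, HasDerivWithinAt f' (f'' u) (Icc a b) u)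
    {t y : ℝ} (ht : t ∈ Icc a b) (hy : y ∈ Icc a b) :
    ∃ ξ ∈ Icc a b, f y - f t - f' t * (y - t) = f'' ξ / 2 * (y - t) ^ 2 := by
  rcases eq_or_ne t y with rfl | hty
  · exact ⟨t, ht, by simp⟩
  have hsq : (y - t) ^ 2 ≠ 0 := pow_ne_zero _ (sub_ne_zero.2 hty.symm)
  set K := (f y - f t - f' t * (y - t)) / (y - t) ^ 2
  -- the remainder as a function of the expansion point, corrected to vanish at both `t` and `y`
  set φ : ℝ → ℝ := fun u => f y - f u - f' u * (y - u) - K * (y - u) ^ 2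
  have hφt : φ t = 0 := by simp only [φ, K]; field_simp; ring
  have hφy : φ y = 0 := by simp [φ]
  have hφc : ContinuousOn φ (Icc a b) := by
    have hfc : ContinuousOn f (Icc a b) := fun u hu => (hf' u hu).continuousWithinAt
    have hf'c : ContinuousOn f' (Icc a b) := fun u hu => (hf'' u hu).continuousWithinAt
    fun_prop
  have hφ' : ∀ u ∈ Ioo a b, HasDerivAt φ ((2 * K - f'' u) * (y - u)) u := by
    intro u hu
    have hnhds : Icc a b ∈ nhds u := Icc_mem_nhds hu.1 hu.2
    have hdf := (hf' u (Ioo_subset_Icc_self hu)).hasDerivAt hnhds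
    have hdf' := (hf'' u (Ioo_subset_Icc_self hu)).hasDerivAt hnhds
    have hlin : HasDerivAt (fun u : ℝ => y - u) (-1) u := by
      simpa using (hasDerivAt_id u).const_sub y
    refine (((hdf.const_sub (f y)).sub (hdf'.mul hlin)).sub
      ((hlin.pow 2).const_mul K)).congr_deriv ?_
    push_cast
    ring
  have hlo : a ≤ min t y := le_min ht.1 hy.1
  have hhi : max t y ≤ b := max_le ht.2 hy.2
  obtain ⟨ξ, hξ, hξ0⟩ := exists_hasDerivAt_eq_zero (min_lt_max.2 hty)
    (hφc.mono (Icc_subset_Icc hlo hhi))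
    (by rcases le_total t y with h | h <;> simp [h, hφt, hφy])
    (fun u hu => hφ' u ⟨hlo.trans_lt hu.1, hu.2.trans_le hhi⟩)
  have hξy : y - ξ ≠ 0 := by
    rcases le_total t y with h | h
    · exact sub_ne_zero.2 (hξ.2.trans_le (max_le h le_rfl)).ne'
    · exact sub_ne_zero.2 ((le_min h le_rfl).trans_lt hξ.1).ne
  have hK : 2 * K = f'' ξ := sub_eq_zero.1 ((mul_eq_zero.1 hξ0).resolve_right hξy)
  refine ⟨ξ, ⟨hlo.trans hξ.1.le, hξ.2.le.trans hhi⟩, ?_⟩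
  rw [← div_mul_cancel₀ (f y - f t - f' t * (y - t)) hsq, ← hK]
  ring

theorem abs_sub_taylor_linear_le {a b M : ℝ} {f f' f'' : ℝ → ℝ}
    (hf' : ∀ u ∈ Icc a b, HasDerivWithinAt f (f' u) (Icc a b) u)
    (hf'' : ∀ u ∈ Icc a b, HasDerivWithinAt f' (f'' u) (Icc a b) u)
    (hM : ∀ u ∈ Icc a b, |f'' u| ≤ M) {t y : ℝ} (ht : t ∈ Icc a b) (hy : y ∈ Icc a b) :
    |f y - f t - f' t * (y - t)| ≤ M / 2 * (y - t) ^ 2 := by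
  obtain ⟨ξ, hξ, hrem⟩ := exists_taylor_linear_remainder_eq hf' hf'' ht hy
  rw [hrem, abs_mul, abs_div, abs_two, abs_of_nonneg (sq_nonneg (y - t))]
  gcongr
  exact hM ξ hξ

noncomputable def lineInterp (f : ℝ → ℝ) (c d t : ℝ) : ℝ :=
  (t - c) / (d - c) * f d + (d - t) / (d - c) * f c

theorem abs_sub_lineInterp_le {c d M : ℝ} {f f' f'' : ℝ → ℝ} (hcd : c < d)
    (hf' : ∀ u ∈ Icc c d, HasDerivWithinAt f (f' u) (Icc c d) u)
    (hf'' : ∀ u ∈ Icc c d, HasDerivWithinAt f' (f'' u) (Icc c d) u)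
    (hM : ∀ u ∈ Icc c d, |f'' u| ≤ M) {t : ℝ} (ht : t ∈ Icc c d) :
    |f t - lineInterp f c d t| ≤ M / 2 * ((t - c) * (d - t)) := by
  set Ec := f c - f t - f' t * (c - t)
  set Ed := f d - f t - f' t * (d - t)
  have hEc : |Ec| ≤ M / 2 * (c - t) ^ 2 :=
    abs_sub_taylor_linear_le hf' hf'' hM ht (left_mem_Icc.2 hcd.le)
  have hEd : |Ed| ≤ M / 2 * (d - t) ^ 2 :=
    abs_sub_taylor_linear_le hf' hf'' hM ht (right_mem_Icc.2 hcd.le)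
  have htc : 0 ≤ t - c := sub_nonneg.2 ht.1
  have hdt : 0 ≤ d - t := sub_nonneg.2 ht.2
  have hdc : 0 < d - c := sub_pos.2 hcd
  have hkey : f t - lineInterp f c d t = -((t - c) * Ed + (d - t) * Ec) / (d - c) := by
    unfold lineInterp
    field_simp
    ring
  calc |f t - lineInterp f c d t| = |(t - c) * Ed + (d - t) * Ec| / (d - c) := by
        rw [hkey, abs_div, abs_neg, abs_of_pos hdc]
    _ ≤ ((t - c) * |Ed| + (d - t) * |Ec|) / (d - c) := by
        gcongr
        refine (abs_add_le _ _).trans_eq ?_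
        rw [abs_mul, abs_mul, abs_of_nonneg htc, abs_of_nonneg hdt]
    _ ≤ ((t - c) * (M / 2 * (d - t) ^ 2) + (d - t) * (M / 2 * (c - t) ^ 2)) / (d - c) := by
        gcongr
    _ = M / 2 * ((t - c) * (d - t)) := by
        field_simp
        ring

theorem stmt0_general (p : ℕ) (hp : 0 < p) (a b : ℝ)
    (f f' f'' s : ℝ → ℝ) (x : Fin (p + 1) → ℝ)
    (hx0 : x 0 = a) (hxp : x (Fin.last p) = b) (hmono : StrictMono x)
    (hf' : ∀ t ∈ Set.Icc a b, HasDerivWithinAt f (f' t) (Set.Icc a b) t)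
    (hf'' : ∀ t ∈ Set.Icc a b, HasDerivWithinAt f' (f'' t) (Set.Icc a b) t)
    (Δx M : ℝ)
    (hΔ : ∀ j : Fin p, x j.succ - x j.castSucc ≤ Δx)
    (hM : ∀ t ∈ Set.Icc a b, |f'' t| ≤ M)
    (hs : ∀ j : Fin p, ∀ t ∈ Set.Icc (x j.castSucc) (x j.succ),
        s t = ((t - x j.castSucc) / (x j.succ - x j.castSucc)) * f (x j.succ)
            + ((x j.succ - t) / (x j.succ - x j.castSucc)) * f (x j.castSucc)) :
    ∀ t ∈ Set.Icc a b, |f t - s t| ≤ (1 / 8) * Δx ^ 2 * M := by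
  intro t ht
  obtain ⟨n, rfl⟩ : ∃ n, p = n + 1 := ⟨p - 1, by omega⟩
  obtain ⟨j, hj⟩ := Fin.exists_mem_Icc_castSucc_succ x (hx0 ▸ ht.1) (hxp ▸ ht.2)
  have hcd : x j.castSucc < x j.succ := hmono Fin.castSucc_lt_succ
  have hsub : Icc (x j.castSucc) (x j.succ) ⊆ Icc a b :=
    Icc_subset_Icc (hx0 ▸ hmono.monotone (Fin.zero_le _)) (hxp ▸ hmono.monotone (Fin.le_last _))
  have hM0 : 0 ≤ M := (abs_nonneg _).trans (hM t ht)
  calc |f t - s t| = |f t - lineInterp f (x j.castSucc) (x j.succ) t| := by rw [hs j t hj]; rfl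
    _ ≤ M / 2 * ((t - x j.castSucc) * (x j.succ - t)) :=
        abs_sub_lineInterp_le hcd (fun u hu => (hf' u (hsub hu)).mono hsub)
          (fun u hu => (hf'' u (hsub hu)).mono hsub) (fun u hu => hM u (hsub hu)) hj
    _ ≤ M / 2 * ((x j.succ - x j.castSucc) ^ 2 / 4) := by
        gcongr
        linarith [four_mul_le_sq_add (t - x j.castSucc) (x j.succ - t)]
    _ ≤ M / 2 * (Δx ^ 2 / 4) := by
        gcongr
        exact hΔ j
    _ = 1 / 8 * Δx ^ 2 * M := by ring

/-- Piecewise linear interpolation error bound: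
for `f` twice continuously differentiable on `[a,b]`, the piecewise linear
interpolant `s` on a partition `a = x_0 < ... < x_p = b` satisfies
`|f(x) - s(x)| ≤ (1/8) Δx² · max |f''|`. -/
theorem stmt0 (p : ℕ) (hp : 0 < p) (a b : ℝ) (hab : a < b)
    (f f' f'' s : ℝ → ℝ) (x : Fin (p + 1) → ℝ)
    (hx0 : x 0 = a) (hxp : x (Fin.last p) = b) (hmono : StrictMono x)
    (hf' : ∀ t ∈ Set.Icc a b, HasDerivWithinAt f (f' t) (Set.Icc a b) t)
    (hf'' : ∀ t ∈ Set.Icc a b, HasDerivWithinAt f' (f'' t) (Set.Icc a b) t)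
    (hcont : ContinuousOn f'' (Set.Icc a b))
    (Δx M : ℝ)
    (hΔ : ∀ j : Fin p, x j.succ - x j.castSucc ≤ Δx)
    (hM : ∀ t ∈ Set.Icc a b, |f'' t| ≤ M)
    (hs : ∀ j : Fin p, ∀ t ∈ Set.Icc (x j.castSucc) (x j.succ),
        s t = ((t - x j.castSucc) / (x j.succ - x j.castSucc)) * f (x j.succ)
            + ((x j.succ - t) / (x j.succ - x j.castSucc)) * f (x j.castSucc)) :
    ∀ t ∈ Set.Icc a b, |f t - s t| ≤ (1 / 8) * Δx ^ 2 * M :=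
  stmt0_general p hp a b f f' f'' s x hx0 hxp hmono hf' hf'' Δx M hΔ hM hs
end

section
/- For a continuous function f on [a,b] with continuous second derivative and its piecewise linear interpolant s on a partition of mesh Δx, at every point x interior to a subinterval, |f'(x) - s'(x)| ≤ (1/2) (Δx) · max_{a ≤ t ≤ b} |f''(t)|. -/
/-!
Write `g u = f u - f t - f' t * (u - t)`. Cauchy's mean value theorem for `g` and `(u - t) ^ 2`,
combined with the Lipschitz bound `|f' ξ - f' t| ≤ M * |ξ - t|` that `|f''| ≤ M` provides, gives
`|g u| ≤ M / 2 * (u - t) ^ 2`. The slope of `f` on `[l, r]` minus `f' t` is `(g r - g l) / (r - l)`, and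
`(r - t) ^ 2 + (t - l) ^ 2 ≤ (r - l) ^ 2` for `l ≤ t ≤ r`.
-/

open Set

theorem exists_taylor_remainder_mul_eq_of_lt {f f' : ℝ → ℝ} {a b : ℝ} (t : ℝ) (hab : a < b)
    (hf : ∀ v ∈ Icc a b, HasDerivWithinAt f (f' v) (Icc a b) v) :
    ∃ ξ ∈ Ioo a b, (f b - f a - f' t * (b - a)) * (2 * (ξ - t)) =
      ((b - t) ^ 2 - (a - t) ^ 2) * (f' ξ - f' t) := by
  have hderiv : ∀ v ∈ Ioo a b, HasDerivAt f (f' v) v := fun v hv =>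
    (hf v (Ioo_subset_Icc_self hv)).hasDerivAt (Icc_mem_nhds hv.1 hv.2)
  have hsq : ∀ v : ℝ, HasDerivAt (fun v => (v - t) ^ 2) (2 * (v - t)) v := fun v =>
    (((hasDerivAt_id' v).sub_const t).fun_pow 2).congr_deriv (by ring)
  have hlin : ∀ v ∈ Ioo a b, HasDerivAt (fun v => f v - f' t * v) (f' v - f' t) v := fun v hv =>
    ((hderiv v hv).fun_sub ((hasDerivAt_id' v).const_mul (f' t))).congr_deriv (by ring)
  obtain ⟨ξ, hξ, h⟩ := exists_ratio_hasDerivAt_eq_ratio_slope _ _ hab (by fun_prop)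
    (fun v _ => hsq v) (fun v => f v - f' t * v) _
    (fun v hv => (hf v hv).continuousWithinAt.sub (continuousWithinAt_id.const_mul (f' t))) hlin
  exact ⟨ξ, hξ, by linear_combination h⟩

theorem Convex.exists_taylor_remainder_mul_eq {f f' : ℝ → ℝ} {s : Set ℝ} {t u : ℝ}
    (hs : Convex ℝ s) (hf : ∀ v ∈ s, HasDerivWithinAt f (f' v) s v) (ht : t ∈ s) (hu : u ∈ s)
    (htu : t ≠ u) :
    ∃ ξ ∈ s, ξ ≠ t ∧ (f u - f t - f' t * (u - t)) * (2 * (ξ - t)) = (u - t) ^ 2 * (f' ξ - f' t) := by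
  have hIcc : ∀ {a b}, a ∈ s → b ∈ s → ∀ v ∈ Icc a b, HasDerivWithinAt f (f' v) (Icc a b) v :=
    fun ha hb v hv => (hf v (hs.ordConnected.out ha hb hv)).mono (hs.ordConnected.out ha hb)
  rcases htu.lt_or_gt with htu | hut
  · obtain ⟨ξ, hξ, h⟩ := exists_taylor_remainder_mul_eq_of_lt t htu (hIcc ht hu)
    refine ⟨ξ, hs.ordConnected.out ht hu (Ioo_subset_Icc_self hξ), hξ.1.ne', ?_⟩
    linear_combination h
  · obtain ⟨ξ, hξ, h⟩ := exists_taylor_remainder_mul_eq_of_lt t hut (hIcc hu ht)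
    refine ⟨ξ, hs.ordConnected.out hu ht (Ioo_subset_Icc_self hξ), hξ.2.ne, ?_⟩
    linear_combination -h

theorem Convex.abs_taylor_remainder_le {f f' : ℝ → ℝ} {s : Set ℝ} {t u K : ℝ}
    (hs : Convex ℝ s) (hf : ∀ v ∈ s, HasDerivWithinAt f (f' v) s v)
    (hK : ∀ v ∈ s, |f' v - f' t| ≤ K * |v - t|) (ht : t ∈ s) (hu : u ∈ s) :
    |f u - f t - f' t * (u - t)| ≤ K / 2 * (u - t) ^ 2 := by
  rcases eq_or_ne t u with rfl | htu
  · simp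
  obtain ⟨ξ, hξ, hξt, heq⟩ := hs.exists_taylor_remainder_mul_eq hf ht hu htu
  have hpos : 0 < 2 * |ξ - t| := by simpa [sub_eq_zero] using hξt
  refine le_of_mul_le_mul_right ?_ hpos
  calc |f u - f t - f' t * (u - t)| * (2 * |ξ - t|) = (u - t) ^ 2 * |f' ξ - f' t| := by
        simpa [abs_mul, sq_abs] using congrArg abs heq
    _ ≤ (u - t) ^ 2 * (K * |ξ - t|) := mul_le_mul_of_nonneg_left (hK ξ hξ) (sq_nonneg _)
    _ = K / 2 * (u - t) ^ 2 * (2 * |ξ - t|) := by ring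

theorem Convex.abs_slope_sub_deriv_le {f f' : ℝ → ℝ} {s : Set ℝ} {l r t K : ℝ}
    (hs : Convex ℝ s) (hf : ∀ v ∈ s, HasDerivWithinAt f (f' v) s v)
    (hK : ∀ v ∈ s, |f' v - f' t| ≤ K * |v - t|) (hK0 : 0 ≤ K) (hl : l ∈ s) (hr : r ∈ s)
    (ht : t ∈ Icc l r) (hlr : l < r) :
    |(f r - f l) / (r - l) - f' t| ≤ K / 2 * (r - l) := by
  have hts : t ∈ s := hs.ordConnected.out hl hr ht
  have hTl := hs.abs_taylor_remainder_le hf hK hts hl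
  have hTr := hs.abs_taylor_remainder_le hf hK hts hr
  have hrl : 0 < r - l := sub_pos.2 hlr
  have hslope : (f r - f l) / (r - l) - f' t =
      ((f r - f t - f' t * (r - t)) - (f l - f t - f' t * (l - t))) / (r - l) := by
    field_simp
    ring
  rw [hslope, abs_div, abs_of_pos hrl, div_le_iff₀ hrl]
  calc |(f r - f t - f' t * (r - t)) - (f l - f t - f' t * (l - t))|
      ≤ |f r - f t - f' t * (r - t)| + |f l - f t - f' t * (l - t)| := abs_sub _ _
    _ ≤ K / 2 * (r - t) ^ 2 + K / 2 * (l - t) ^ 2 := add_le_add hTr hTl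
    _ ≤ K / 2 * (r - l) * (r - l) := by
        nlinarith [mul_nonneg hK0 (mul_nonneg (sub_nonneg.2 ht.1) (sub_nonneg.2 ht.2))]

theorem stmt1_general (p : ℕ) (a b : ℝ)
    (f f' f'' s' : ℝ → ℝ) (x : Fin (p + 1) → ℝ)
    (hx0 : x 0 = a) (hxp : x (Fin.last p) = b) (hmono : StrictMono x)
    (hf' : ∀ t ∈ Set.Icc a b, HasDerivWithinAt f (f' t) (Set.Icc a b) t)
    (hf'' : ∀ t ∈ Set.Icc a b, HasDerivWithinAt f' (f'' t) (Set.Icc a b) t)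
    (Δx M : ℝ)
    (hΔ : ∀ j : Fin p, x j.succ - x j.castSucc ≤ Δx)
    (hM : ∀ t ∈ Set.Icc a b, |f'' t| ≤ M)
    (hs' : ∀ j : Fin p, ∀ t ∈ Set.Ioo (x j.castSucc) (x j.succ),
        s' t = (f (x j.succ) - f (x j.castSucc)) / (x j.succ - x j.castSucc)) :
    ∀ j : Fin p, ∀ t ∈ Set.Ioo (x j.castSucc) (x j.succ),
      |f' t - s' t| ≤ (1 / 2) * Δx * M := by
  intro j t ht
  have hlr : x j.castSucc < x j.succ := hmono Fin.castSucc_lt_succ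
  have hsub : Icc (x j.castSucc) (x j.succ) ⊆ Icc a b :=
    Icc_subset_Icc (hx0 ▸ hmono.monotone (Fin.zero_le _)) (hxp ▸ hmono.monotone (Fin.le_last _))
  have htab : t ∈ Icc a b := hsub (Ioo_subset_Icc_self ht)
  have hlip : ∀ v ∈ Icc a b, |f' v - f' t| ≤ M * |v - t| := fun v hv => by
    simpa only [Real.norm_eq_abs] using (convex_Icc a b).norm_image_sub_le_of_norm_hasDerivWithin_le
      hf'' (fun w hw => by simpa only [Real.norm_eq_abs] using hM w hw) htab hv
  have hM0 : 0 ≤ M := (abs_nonneg _).trans (hM t htab)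
  rw [hs' j t ht, abs_sub_comm]
  calc _ ≤ M / 2 * (x j.succ - x j.castSucc) :=
        (convex_Icc a b).abs_slope_sub_deriv_le hf' hlip hM0 (hsub (left_mem_Icc.2 hlr.le))
          (hsub (right_mem_Icc.2 hlr.le)) (Ioo_subset_Icc_self ht) hlr
    _ ≤ 1 / 2 * Δx * M := by nlinarith [hΔ j]

/-- Piecewise linear interpolation derivative error bound: at every point interior
to a subinterval, `|f'(x) - s'(x)| ≤ (1/2) Δx · max |f''|`, where `s'` equals the
slope `(f(x_j) - f(x_{j-1}))/(x_j - x_{j-1})` on the interior of `[x_{j-1}, x_j]`. -/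
theorem stmt1 (p : ℕ) (hp : 0 < p) (a b : ℝ) (hab : a < b)
    (f f' f'' s' : ℝ → ℝ) (x : Fin (p + 1) → ℝ)
    (hx0 : x 0 = a) (hxp : x (Fin.last p) = b) (hmono : StrictMono x)
    (hf' : ∀ t ∈ Set.Icc a b, HasDerivWithinAt f (f' t) (Set.Icc a b) t)
    (hf'' : ∀ t ∈ Set.Icc a b, HasDerivWithinAt f' (f'' t) (Set.Icc a b) t)
    (hcont : ContinuousOn f'' (Set.Icc a b))
    (Δx M : ℝ)
    (hΔ : ∀ j : Fin p, x j.succ - x j.castSucc ≤ Δx)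
    (hM : ∀ t ∈ Set.Icc a b, |f'' t| ≤ M)
    (hs' : ∀ j : Fin p, ∀ t ∈ Set.Ioo (x j.castSucc) (x j.succ),
        s' t = (f (x j.succ) - f (x j.castSucc)) / (x j.succ - x j.castSucc)) :
    ∀ j : Fin p, ∀ t ∈ Set.Ioo (x j.castSucc) (x j.succ),
      |f' t - s' t| ≤ (1 / 2) * Δx * M :=
  stmt1_general p a b f f' f'' s' x hx0 hxp hmono hf' hf'' Δx M hΔ hM hs'
end

section
/- Let M, N, P be n × n Hermitian matrices with M = N + P. Denote the eigenvalues of M, N, P in decreasing order by μ_1 ≥ ... ≥ μ_n, ν_1 ≥ ... ≥ ν_n, and ρ_1 ≥ ... ≥ ρ_n respectively. Then for every index i, ν_i + ρ_n ≤ μ_i ≤ ν_i + ρ_1. -/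
/-! The eigenvectors of `N` for `ν_1, …, ν_i` span an `i`-dimensional space on which
`re ⟪x, N x⟫ ≥ ν_i ‖x‖²`, and those of `M` for `μ_i, …, μ_n` span an `(n - i + 1)`-dimensional
space on which `re ⟪x, M x⟫ ≤ μ_i ‖x‖²`. The two spaces share a nonzero vector `x`, and
`re ⟪x, P x⟫ ≥ ρ_n ‖x‖²` then forces `ν_i + ρ_n ≤ μ_i`. The upper bound is the same argument
applied to `N = M + (-P)`. -/

open Finset Module Matrix
open scoped InnerProductSpace

section OrthonormalEigenvectors

variable {𝕜 E ι : Type*} [RCLike 𝕜] [NormedAddCommGroup E] [InnerProductSpace 𝕜 E] [Fintype ι]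
  {T : E →ₗ[𝕜] E} {g : ι → E} {lam : ι → ℝ}

theorem Orthonormal.re_inner_map_self_sum_smul (hg : Orthonormal 𝕜 g)
    (hT : ∀ i, T (g i) = (lam i : 𝕜) • g i) (a : ι → 𝕜) :
    RCLike.re ⟪∑ i, a i • g i, T (∑ i, a i • g i)⟫_𝕜 = ∑ i, lam i * ‖a i‖ ^ 2 := by
  have hTa : T (∑ i, a i • g i) = ∑ i, (a i * lam i) • g i := by
    simp only [map_sum, map_smul, hT, smul_smul]
  rw [hTa, hg.inner_sum, map_sum]
  refine Finset.sum_congr rfl fun i _ => ?_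
  rw [← mul_assoc, RCLike.conj_mul, ← RCLike.ofReal_pow, ← RCLike.ofReal_mul, RCLike.ofReal_re,
    mul_comm]

theorem Orthonormal.norm_sum_smul_sq (hg : Orthonormal 𝕜 g) (a : ι → 𝕜) :
    ‖∑ i, a i • g i‖ ^ 2 = ∑ i, ‖a i‖ ^ 2 := by
  simpa [← norm_sq_eq_re_inner] using
    hg.re_inner_map_self_sum_smul (T := LinearMap.id) (lam := 1) (by simp) a

theorem Orthonormal.mul_norm_sq_le_re_inner_map_self (hg : Orthonormal 𝕜 g)
    (hT : ∀ i, T (g i) = (lam i : 𝕜) • g i) {c : ℝ} (hc : ∀ i, c ≤ lam i) {x : E}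
    (hx : x ∈ Submodule.span 𝕜 (Set.range g)) :
    c * ‖x‖ ^ 2 ≤ RCLike.re ⟪x, T x⟫_𝕜 := by
  obtain ⟨a, rfl⟩ := (Submodule.mem_span_range_iff_exists_fun 𝕜).1 hx
  rw [hg.re_inner_map_self_sum_smul hT, hg.norm_sum_smul_sq, Finset.mul_sum]
  gcongr with i
  exact hc i

theorem Orthonormal.re_inner_map_self_le_mul_norm_sq (hg : Orthonormal 𝕜 g)
    (hT : ∀ i, T (g i) = (lam i : 𝕜) • g i) {c : ℝ} (hc : ∀ i, lam i ≤ c) {x : E}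
    (hx : x ∈ Submodule.span 𝕜 (Set.range g)) :
    RCLike.re ⟪x, T x⟫_𝕜 ≤ c * ‖x‖ ^ 2 := by
  obtain ⟨a, rfl⟩ := (Submodule.mem_span_range_iff_exists_fun 𝕜).1 hx
  rw [hg.re_inner_map_self_sum_smul hT, hg.norm_sum_smul_sq, Finset.mul_sum]
  gcongr with i
  exact hc i

end OrthonormalEigenvectors

theorem Submodule.inf_ne_bot_of_finrank_lt_add {K V : Type*} [DivisionRing K] [AddCommGroup V]
    [Module K V] [FiniteDimensional K V] {U W : Submodule K V}
    (h : finrank K V < finrank K U + finrank K W) : U ⊓ W ≠ ⊥ := by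
  intro hbot
  have hsum := Submodule.finrank_sup_add_finrank_inf_eq U W
  rw [hbot, finrank_bot, add_zero] at hsum
  have := Submodule.finrank_le (U ⊔ W)
  omega

namespace Matrix.IsHermitian

variable {𝕜 : Type*} [RCLike 𝕜]

section

variable {ι : Type*} [Fintype ι] [DecidableEq ι] {A : Matrix ι ι 𝕜}

theorem toEuclideanLin_eigenvectorBasis (hA : A.IsHermitian) (j : ι) :
    A.toEuclideanLin (hA.eigenvectorBasis j) = (hA.eigenvalues j : 𝕜) • hA.eigenvectorBasis j := by
  ext k
  rw [← RCLike.real_smul_eq_coe_smul]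
  exact congrFun (hA.mulVec_eigenvectorBasis j) k

theorem orthonormal_eigenvectorBasis_restrict (hA : A.IsHermitian) (s : Finset ι) :
    Orthonormal 𝕜 fun j : s => hA.eigenvectorBasis j :=
  hA.eigenvectorBasis.orthonormal.comp _ Subtype.val_injective

theorem finrank_span_eigenvectorBasis_restrict (hA : A.IsHermitian) (s : Finset ι) :
    finrank 𝕜 (Submodule.span 𝕜 (Set.range fun j : s => hA.eigenvectorBasis j)) = #s := by
  rw [finrank_span_eq_card (hA.orthonormal_eigenvectorBasis_restrict s).linearIndependent,
    Fintype.card_coe]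

theorem exists_finrank_eq_forall_mul_norm_sq_le (hA : A.IsHermitian) (s : Finset ι) {c : ℝ}
    (hc : ∀ j ∈ s, c ≤ hA.eigenvalues j) :
    ∃ U : Submodule 𝕜 (EuclideanSpace 𝕜 ι), finrank 𝕜 U = #s ∧
      ∀ x ∈ U, c * ‖x‖ ^ 2 ≤ RCLike.re ⟪x, A.toEuclideanLin x⟫_𝕜 :=
  ⟨_, hA.finrank_span_eigenvectorBasis_restrict s, fun _ hx =>
    (hA.orthonormal_eigenvectorBasis_restrict s).mul_norm_sq_le_re_inner_map_self
      (fun j => hA.toEuclideanLin_eigenvectorBasis j) (fun j => hc j j.2) hx⟩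

theorem exists_finrank_eq_forall_le_mul_norm_sq (hA : A.IsHermitian) (s : Finset ι) {c : ℝ}
    (hc : ∀ j ∈ s, hA.eigenvalues j ≤ c) :
    ∃ U : Submodule 𝕜 (EuclideanSpace 𝕜 ι), finrank 𝕜 U = #s ∧
      ∀ x ∈ U, RCLike.re ⟪x, A.toEuclideanLin x⟫_𝕜 ≤ c * ‖x‖ ^ 2 :=
  ⟨_, hA.finrank_span_eigenvectorBasis_restrict s, fun _ hx =>
    (hA.orthonormal_eigenvectorBasis_restrict s).re_inner_map_self_le_mul_norm_sq
      (fun j => hA.toEuclideanLin_eigenvectorBasis j) (fun j => hc j j.2) hx⟩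

theorem re_inner_le_mul_norm_sq (hA : A.IsHermitian) {c : ℝ} (hc : ∀ j, hA.eigenvalues j ≤ c)
    (x : EuclideanSpace 𝕜 ι) : RCLike.re ⟪x, A.toEuclideanLin x⟫_𝕜 ≤ c * ‖x‖ ^ 2 := by
  obtain ⟨U, hU, hUc⟩ := hA.exists_finrank_eq_forall_le_mul_norm_sq univ fun j _ => hc j
  have hU_top : U = ⊤ :=
    Submodule.eq_top_of_finrank_eq (by rw [hU, card_univ, finrank_euclideanSpace])
  exact hUc x (hU_top ▸ Submodule.mem_top)

theorem mul_norm_sq_le_re_inner (hA : A.IsHermitian) {c : ℝ} (hc : ∀ j, c ≤ hA.eigenvalues j)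
    (x : EuclideanSpace 𝕜 ι) : c * ‖x‖ ^ 2 ≤ RCLike.re ⟪x, A.toEuclideanLin x⟫_𝕜 := by
  obtain ⟨U, hU, hUc⟩ := hA.exists_finrank_eq_forall_mul_norm_sq_le univ fun j _ => hc j
  have hU_top : U = ⊤ :=
    Submodule.eq_top_of_finrank_eq (by rw [hU, card_univ, finrank_euclideanSpace])
  exact hUc x (hU_top ▸ Submodule.mem_top)

end

variable {n : ℕ} {A B : Matrix (Fin n) (Fin n) 𝕜}

theorem sorted_eigenvalues_add_le (hA : A.IsHermitian) (hB : B.IsHermitian) {α β : Fin n → ℝ}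
    {eα eβ : Equiv.Perm (Fin n)} (hα : α = hA.eigenvalues ∘ eα) (hβ : β = hB.eigenvalues ∘ eβ)
    (hαa : Antitone α) (hβa : Antitone β) {c : ℝ}
    (hc : ∀ x, c * ‖x‖ ^ 2 ≤
      RCLike.re ⟪x, A.toEuclideanLin x⟫_𝕜 - RCLike.re ⟪x, B.toEuclideanLin x⟫_𝕜)
    (i : Fin n) : β i + c ≤ α i := by
  subst hα hβ
  obtain ⟨U, hU, hUB⟩ := hB.exists_finrank_eq_forall_mul_norm_sq_le
    ((Iic i).map eβ.toEmbedding) (forall_mem_map.2 fun k hk => hβa (mem_Iic.1 hk))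
  obtain ⟨V, hV, hVA⟩ := hA.exists_finrank_eq_forall_le_mul_norm_sq
    ((Ici i).map eα.toEmbedding) (forall_mem_map.2 fun k hk => hαa (mem_Ici.1 hk))
  have hUV : U ⊓ V ≠ ⊥ := Submodule.inf_ne_bot_of_finrank_lt_add <| by
    rw [hU, hV, card_map, card_map, Fin.card_Iic, Fin.card_Ici, finrank_euclideanSpace_fin]
    omega
  obtain ⟨x, ⟨hxU, hxV⟩, hx0⟩ := Submodule.exists_mem_ne_zero_of_ne_bot hUV
  have hx : 0 < ‖x‖ ^ 2 := by positivity
  refine le_of_mul_le_mul_right ?_ hx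
  linarith [hUB x hxU, hVA x hxV, hc x]

end Matrix.IsHermitian

/-- Weyl's inequality: for Hermitian `n × n` matrices `M = N + P` with eigenvalues
listed in decreasing order `μ`, `ν`, `ρ` respectively, for every index `i`,
`ν_i + ρ_n ≤ μ_i ≤ ν_i + ρ_1`. -/
theorem stmt6 (n : ℕ) (hn : 0 < n) (M N P : Matrix (Fin n) (Fin n) ℂ)
    (hMNP : M = N + P)
    (hM : M.IsHermitian) (hN : N.IsHermitian) (hP : P.IsHermitian)
    (μ ν ρ : Fin n → ℝ)
    (eμ eν eρ : Equiv.Perm (Fin n))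
    (hμ : μ = hM.eigenvalues ∘ eμ) (hν : ν = hN.eigenvalues ∘ eν)
    (hρ : ρ = hP.eigenvalues ∘ eρ)
    (hμa : Antitone μ) (hνa : Antitone ν) (hρa : Antitone ρ) :
    ∀ i : Fin n, ν i + ρ ⟨n - 1, by omega⟩ ≤ μ i ∧ μ i ≤ ν i + ρ ⟨0, hn⟩ := by
  intro i
  have hρ_min : ∀ j, ρ ⟨n - 1, by omega⟩ ≤ hP.eigenvalues j := fun j => by
    simpa [hρ] using hρa (show eρ.symm j ≤ ⟨n - 1, by omega⟩ from
      Fin.le_def.2 (Nat.le_sub_one_of_lt (eρ.symm j).2))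
  have hρ_max : ∀ j, hP.eigenvalues j ≤ ρ ⟨0, hn⟩ := fun j => by
    simpa [hρ] using hρa (show ⟨0, hn⟩ ≤ eρ.symm j from Fin.le_def.2 (Nat.zero_le _))
  have hMNP_quad : ∀ x : EuclideanSpace ℂ (Fin n),
      RCLike.re ⟪x, M.toEuclideanLin x⟫_ℂ - RCLike.re ⟪x, N.toEuclideanLin x⟫_ℂ =
        RCLike.re ⟪x, P.toEuclideanLin x⟫_ℂ := fun x => by
    rw [hMNP, map_add, LinearMap.add_apply, inner_add_right, map_add, add_sub_cancel_left]
  constructor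
  · exact hM.sorted_eigenvalues_add_le hN hμ hν hμa hνa
      (fun x => hMNP_quad x ▸ hP.mul_norm_sq_le_re_inner hρ_min x) i
  · have hN_le := hN.sorted_eigenvalues_add_le hM hν hμ hνa hμa (c := -ρ ⟨0, hn⟩)
      (fun x => by linarith [hMNP_quad x, hP.re_inner_le_mul_norm_sq hρ_max x]) i
    linarith
end

section
/- Consider vector sequences w^{(t+1)} = A_t w^{(t)} + b_t and v^{(t+1)} = B_t v^{(t)} + b_t in ℝ^m with w^{(0)} = v^{(0)}, where ‖A_t‖₂ ≤ 1 - ηλ, ‖A_t - B_t‖₂ ≤ η ε, and ‖v^{(t)}‖ ≤ C for all t (η, λ, ε, C > 0, ηλ < 1). Then ‖w^{(t)} - v^{(t)}‖ ≤ εC/λ for all t. -/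
/-- SVD-approximation error bound: if `w^{(t+1)} = A_t w^{(t)} + b_t` and
`v^{(t+1)} = B_t v^{(t)} + b_t` with `w^{(0)} = v^{(0)}`, `‖A_t‖₂ ≤ 1 - ηλ`,
`‖A_t - B_t‖₂ ≤ ηε`, and `‖v^{(t)}‖ ≤ C`, then `‖w^{(t)} - v^{(t)}‖ ≤ εC/λ`. -/
theorem stmt10 (m : ℕ) (η lam ε C : ℝ) (hη : 0 < η) (hlam : 0 < lam)
    (hηlam : η * lam < 1) (hε : 0 < ε) (hC : 0 < C)
    (A B : ℕ → EuclideanSpace ℝ (Fin m) →L[ℝ] EuclideanSpace ℝ (Fin m))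
    (b w v : ℕ → EuclideanSpace ℝ (Fin m))
    (h0 : w 0 = v 0)
    (hA : ∀ t, ‖A t‖ ≤ 1 - η * lam)
    (hAB : ∀ t, ‖A t - B t‖ ≤ η * ε)
    (hv : ∀ t, ‖v t‖ ≤ C)
    (hrecw : ∀ t, w (t + 1) = A t (w t) + b t)
    (hrecv : ∀ t, v (t + 1) = B t (v t) + b t) :
    ∀ t, ‖w t - v t‖ ≤ ε * C / lam := by
  intro t
  induction t with
  | zero => simp [h0, le_div_iff₀ hlam]; positivity
  | succ t ih =>
    have hdiff : w (t + 1) - v (t + 1) = A t (w t - v t) + (A t - B t) (v t) := by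
      rw [hrecw, hrecv]
      simp [map_sub, ContinuousLinearMap.sub_apply]
    have h1 : ‖A t (w t - v t)‖ ≤ (1 - η * lam) * (ε * C / lam) := by
      calc ‖A t (w t - v t)‖ ≤ ‖A t‖ * ‖w t - v t‖ := (A t).le_opNorm _
        _ ≤ (1 - η * lam) * (ε * C / lam) := by
            apply mul_le_mul (hA t) ih (norm_nonneg _)
            linarith
    have h2 : ‖(A t - B t) (v t)‖ ≤ η * ε * C := by
      calc ‖(A t - B t) (v t)‖ ≤ ‖A t - B t‖ * ‖v t‖ := (A t - B t).le_opNorm _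
        _ ≤ η * ε * C := mul_le_mul (hAB t) (hv t) (norm_nonneg _) (by positivity)
    calc ‖w (t + 1) - v (t + 1)‖ ≤ ‖A t (w t - v t)‖ + ‖(A t - B t) (v t)‖ := by
          rw [hdiff]; exact norm_add_le _ _
      _ ≤ (1 - η * lam) * (ε * C / lam) + η * ε * C := add_le_add h1 h2
      _ = ε * C / lam := by field_simp; ring
end

section
/- Let x ∈ ℝ^m be nonzero, η, λ, n > 0 with ηλ < 1 and ‖(η/n) x xᵀ‖₂ > 1/2 · 1/(1 - ηλ). For the binomial expansion of ((1-ηλ)I - (2η/n) x xᵀ)^t, the term with index k = t/2 (t even), namely binom(t, t/2)(1-ηλ)^{t/2}(-(2η/n) x xᵀ)^{t/2}, has operator norm tending to infinity as t → ∞. Hence the coefficient sequence of the monomial p^t in the provenance expansion does not converge. -/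
/-! The matrix `x xᵀ` is symmetric, so in the C*-algebra of operators on Euclidean space the
norm of its powers is multiplicative: `‖A ^ k‖ = ‖A‖ ^ k`. The `k`-th term is then at least
`((1 - ηλ) · 2‖(η/n) x xᵀ‖) ^ k`, a geometric sequence whose ratio exceeds `1` by hypothesis. -/

open Filter

/-- Compare `‖a‖ ^ 2 ^ j = ‖a ^ 2 ^ j‖ ≤ ‖a ^ k‖ ‖a‖ ^ (2 ^ j - k)` for some `2 ^ j > k`. -/
theorem IsSelfAdjoint.norm_pow {E : Type*} [NormedRing E] [StarRing E] [CStarRing E] {a : E}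
    (ha : IsSelfAdjoint a) {k : ℕ} (hk : k ≠ 0) : ‖a ^ k‖ = ‖a‖ ^ k := by
  refine le_antisymm (norm_pow_le' a (Nat.pos_of_ne_zero hk)) ?_
  rcases (norm_nonneg a).eq_or_lt with ha0 | ha0
  · rw [← ha0, zero_pow hk]
    exact norm_nonneg _
  obtain ⟨j, hj⟩ : ∃ j, k < 2 ^ j := ⟨k, Nat.lt_two_pow_self⟩
  have hsplit : a ^ 2 ^ j = a ^ k * a ^ (2 ^ j - k) := by
    rw [← pow_add, Nat.add_sub_cancel' hj.le]
  have key : ‖a‖ ^ k * ‖a‖ ^ (2 ^ j - k) ≤ ‖a ^ k‖ * ‖a‖ ^ (2 ^ j - k) :=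
    calc ‖a‖ ^ k * ‖a‖ ^ (2 ^ j - k) = ‖a ^ 2 ^ j‖ := by
          rw [ha.norm_pow_two_pow, ← pow_add, Nat.add_sub_cancel' hj.le]
      _ ≤ ‖a ^ k‖ * ‖a ^ (2 ^ j - k)‖ := hsplit ▸ norm_mul_le _ _
      _ ≤ ‖a ^ k‖ * ‖a‖ ^ (2 ^ j - k) := by
          gcongr
          exact norm_pow_le' a (Nat.sub_pos_of_lt hj)
  exact le_of_mul_le_mul_right key (pow_pos ha0 _)

theorem Matrix.isSelfAdjoint_vecMulVec_star {m α : Type*} [Mul α] [StarMul α] (x : m → α) :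
    IsSelfAdjoint (Matrix.vecMulVec x (star x)) := by
  rw [IsSelfAdjoint, Matrix.star_eq_conjTranspose, Matrix.conjTranspose_vecMulVec, star_star]

theorem tendsto_choose_mul_pow_atTop {q : ℝ} (hq : 1 < q) :
    Tendsto (fun k : ℕ => (((2 * k).choose k : ℕ) : ℝ) * q ^ k) atTop atTop := by
  refine tendsto_atTop_mono (fun k => ?_) (tendsto_pow_atTop_atTop_of_one_lt hq)
  have hchoose : (1 : ℝ) ≤ ((2 * k).choose k : ℕ) := by
    exact_mod_cast Nat.choose_pos (by omega)
  exact le_mul_of_one_le_left (by positivity) hchoose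

theorem stmt17_general (m n : ℕ) (x : Fin m → ℝ)
    (η lam : ℝ) (hηlam : η * lam < 1)
    (hbig : ‖Matrix.toEuclideanCLM (𝕜 := ℝ)
        ((η / n) • Matrix.vecMulVec x x)‖ > 1 / 2 * (1 / (1 - η * lam))) :
    Filter.Tendsto
      (fun k : ℕ => (((2 * k).choose k : ℕ) : ℝ) * (1 - η * lam) ^ k *
        ‖Matrix.toEuclideanCLM (𝕜 := ℝ)
          ((-((2 * η / n) • Matrix.vecMulVec x x)) ^ k)‖)
      Filter.atTop Filter.atTop := by
  set S := Matrix.toEuclideanCLM (𝕜 := ℝ) ((η / n) • Matrix.vecMulVec x x)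
  have hS : IsSelfAdjoint S := by
    have hM := Matrix.isSelfAdjoint_vecMulVec_star x
    rw [star_trivial] at hM
    exact ((IsSelfAdjoint.all _).smul hM).map Matrix.toEuclideanCLM
  have hA : Matrix.toEuclideanCLM (𝕜 := ℝ) (-((2 * η / n) • Matrix.vecMulVec x x))
      = (-2 : ℝ) • S := by
    rw [← map_smul, smul_smul, show (-2 : ℝ) * (η / n) = -(2 * η / n) by ring, neg_smul]
  have hq : 1 < (1 - η * lam) * (2 * ‖S‖) := by
    have h1 : 0 < 1 - η * lam := by linarith
    calc (1 : ℝ) = (1 - η * lam) * 2 * (1 / 2 * (1 / (1 - η * lam))) := by field_simp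
      _ < (1 - η * lam) * 2 * ‖S‖ := by gcongr
      _ = (1 - η * lam) * (2 * ‖S‖) := mul_assoc _ _ _
  refine (tendsto_choose_mul_pow_atTop hq).congr' ?_
  filter_upwards [eventually_ne_atTop 0] with k hk
  rw [map_pow, hA, ((IsSelfAdjoint.all _).smul hS).norm_pow hk, norm_smul, mul_pow, mul_assoc]
  norm_num

/-- Non-convergence of provenance coefficients: for `x ≠ 0`, `η, λ, n > 0`,
`ηλ < 1` and `‖(η/n) x xᵀ‖₂ > (1/2)·1/(1-ηλ)`, the operator norm of the central
binomial term `binom(t, t/2)(1-ηλ)^{t/2}(-(2η/n) x xᵀ)^{t/2}` (with `t = 2k`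
even) tends to infinity as `t → ∞`. -/
theorem stmt17 (m n : ℕ) (hn : 0 < n) (x : Fin m → ℝ) (hx : x ≠ 0)
    (η lam : ℝ) (hη : 0 < η) (hlam : 0 < lam) (hηlam : η * lam < 1)
    (hbig : ‖Matrix.toEuclideanCLM (𝕜 := ℝ)
        ((η / n) • Matrix.vecMulVec x x)‖ > 1 / 2 * (1 / (1 - η * lam))) :
    Filter.Tendsto
      (fun k : ℕ => (((2 * k).choose k : ℕ) : ℝ) * (1 - η * lam) ^ k *
        ‖Matrix.toEuclideanCLM (𝕜 := ℝ)
          ((-((2 * η / n) • Matrix.vecMulVec x x)) ^ k)‖)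
      Filter.atTop Filter.atTop :=
  stmt17_general m n x η lam hηlam hbig
end
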